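/- arXiv:1707.08644 — 2 statements merged into one kernel-verified Lean document; each statement's English description precedes it below -/
import Mathlib

section
/- For μ > 0 fixed, the function h(x) = (-log x + log μ)/(x-μ)² + 1/(μ(x-μ)), defined for x > 0, x ≠ μ, is monotonically decreasing in x. -/
/-!
Write `h(x) = R(x) / (x - μ)²` with `R(x) = φ(x) - φ(μ) - φ'(μ)(x - μ)` the tangent remainder of
`φ = -log`. Then `h'(x) = N(x)(x - μ) / (x - μ)⁴` with `N(x) = (φ'(x) - φ'(μ))(x - μ) - 2R(x)`, and
`N'(x) = φ''(x)(x - μ) - (φ'(x) - φ'(μ)) ≤ 0` because the concave `φ'` lies below its tangent at `x`.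
Since `N(μ) = 0`, `N(x)(x - μ) ≤ 0`, so `h` decreases on each side of `μ`. To cross `μ`, the function
`G = R - φ''(μ)(x - μ)² / 2` has `G' ≤ 0` by the tangent at `μ` and `G(μ) = 0`, so `h ≥ φ''(μ) / 2`
to the left of `μ` and `h ≤ φ''(μ) / 2` to the right.
-/

open Set

lemma ConcaveOn.le_add_mul_sub_of_hasDerivAt {s : Set ℝ} {g : ℝ → ℝ} {g' x y : ℝ}
    (hg : ConcaveOn ℝ s g) (hx : x ∈ s) (hy : y ∈ s) (hg' : HasDerivAt g g' x) :
    g y ≤ g x + g' * (y - x) := by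
  rcases lt_trichotomy x y with hxy | rfl | hyx
  · have := hg.slope_le_of_hasDerivAt hx hy hxy hg'
    rw [slope_def_field, div_le_iff₀ (sub_pos.2 hxy)] at this
    linarith
  · simp
  · have := hg.le_slope_of_hasDerivAt hy hx hyx hg'
    rw [slope_def_field, le_div_iff₀ (sub_pos.2 hyx)] at this
    linarith

lemma Convex.antitoneOn_of_hasDerivAt_nonpos {D : Set ℝ} {f f' : ℝ → ℝ} (hD : Convex ℝ D)
    (hf : ∀ x ∈ D, HasDerivAt f (f' x) x) (hf' : ∀ x ∈ D, f' x ≤ 0) :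
    AntitoneOn f D :=
  antitoneOn_of_hasDerivWithinAt_nonpos hD
    (fun x hx ↦ (hf x hx).continuousAt.continuousWithinAt)
    (fun x hx ↦ (hf x (interior_subset hx)).hasDerivWithinAt)
    (fun x hx ↦ hf' x (interior_subset hx))

lemma AntitoneOn.mul_sub_nonpos {s : Set ℝ} {f : ℝ → ℝ} {a x : ℝ} (hf : AntitoneOn f s)
    (ha : a ∈ s) (hfa : f a = 0) (hx : x ∈ s) : f x * (x - a) ≤ 0 := by
  rcases le_total x a with hxa | hax
  · exact mul_nonpos_of_nonneg_of_nonpos (hfa ▸ hf hx ha hxa) (sub_nonpos.2 hxa)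
  · exact mul_nonpos_of_nonpos_of_nonneg (hfa ▸ hf ha hx hax) (sub_nonneg.2 hax)

lemma AntitoneOn.diff_singleton_of_separated {s : Set ℝ} {f : ℝ → ℝ} {a c : ℝ}
    (hl : AntitoneOn f (s ∩ Iio a)) (hr : AntitoneOn f (s ∩ Ioi a))
    (hlc : ∀ x ∈ s, x < a → c ≤ f x) (hrc : ∀ x ∈ s, a < x → f x ≤ c) :
    AntitoneOn f (s \ {a}) := by
  rintro x ⟨hxs, hxa⟩ y ⟨hys, hya⟩ hxy
  rcases lt_or_gt_of_ne hxa with hxa | hxa <;> rcases lt_or_gt_of_ne hya with hya | hya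
  · exact hl ⟨hxs, hxa⟩ ⟨hys, hya⟩ hxy
  · exact (hrc y hys hya).trans (hlc x hxs hxa)
  · exact absurd (hxy.trans_lt hya) (not_lt.2 hxa.le)
  · exact hr ⟨hxs, hxa⟩ ⟨hys, hya⟩ hxy

def tangentRemainder (φ φ' : ℝ → ℝ) (μ x : ℝ) : ℝ :=
  φ x - φ μ - φ' μ * (x - μ)

section TangentRemainder

variable {φ φ' φ'' : ℝ → ℝ} {s : Set ℝ} {μ : ℝ}

lemma hasDerivAt_tangentRemainder {x : ℝ} (hφ : HasDerivAt φ (φ' x) x) :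
    HasDerivAt (tangentRemainder φ φ' μ) (φ' x - φ' μ) x :=
  ((hφ.sub_const (φ μ)).sub (((hasDerivAt_id' x).sub_const μ).const_mul (φ' μ))).congr_deriv
    (by ring)

@[simp] lemma tangentRemainder_self : tangentRemainder φ φ' μ μ = 0 := by
  simp [tangentRemainder]

lemma antitoneOn_tangentRemainder_sub_sq (hs : Convex ℝ s) (hμ : μ ∈ s)
    (hφ : ∀ x ∈ s, HasDerivAt φ (φ' x) x) (hφ' : ∀ x ∈ s, HasDerivAt φ' (φ'' x) x)
    (hc : ConcaveOn ℝ s φ') :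
    AntitoneOn (fun x ↦ tangentRemainder φ φ' μ x - φ'' μ / 2 * (x - μ) ^ 2) s := by
  refine hs.antitoneOn_of_hasDerivAt_nonpos
    (f' := fun x ↦ φ' x - φ' μ - φ'' μ * (x - μ)) (fun x hx ↦ ?_) (fun x hx ↦ ?_)
  · exact ((hasDerivAt_tangentRemainder (hφ x hx)).sub
      ((((hasDerivAt_id' x).sub_const μ).pow 2).const_mul (φ'' μ / 2))).congr_deriv (by ring)
  · linarith [hc.le_add_mul_sub_of_hasDerivAt hμ hx (hφ' μ hμ)]

lemma antitoneOn_sub_mul_sub_tangentRemainder (hs : Convex ℝ s) (hμ : μ ∈ s)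
    (hφ : ∀ x ∈ s, HasDerivAt φ (φ' x) x) (hφ' : ∀ x ∈ s, HasDerivAt φ' (φ'' x) x)
    (hc : ConcaveOn ℝ s φ') :
    AntitoneOn (fun x ↦ (φ' x - φ' μ) * (x - μ) - 2 * tangentRemainder φ φ' μ x) s := by
  refine hs.antitoneOn_of_hasDerivAt_nonpos
    (f' := fun x ↦ φ'' x * (x - μ) - (φ' x - φ' μ)) (fun x hx ↦ ?_) (fun x hx ↦ ?_)
  · exact ((((hφ' x hx).sub_const (φ' μ)).mul ((hasDerivAt_id' x).sub_const μ)).sub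
      ((hasDerivAt_tangentRemainder (hφ x hx)).const_mul 2)).congr_deriv (by ring)
  · linarith [hc.le_add_mul_sub_of_hasDerivAt hx hμ (hφ' x hx)]

lemma hasDerivAt_tangentRemainder_div_sq {x : ℝ} (hx : x ≠ μ) (hφ : HasDerivAt φ (φ' x) x) :
    HasDerivAt (fun x ↦ tangentRemainder φ φ' μ x / (x - μ) ^ 2)
      (((φ' x - φ' μ) * (x - μ) - 2 * tangentRemainder φ φ' μ x) * (x - μ) / ((x - μ) ^ 2) ^ 2)
      x := by
  refine ((hasDerivAt_tangentRemainder hφ).div (((hasDerivAt_id' x).sub_const μ).pow 2)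
    (pow_ne_zero 2 (sub_ne_zero.2 hx))).congr_deriv ?_
  simp only [Pi.pow_apply, Nat.cast_ofNat]
  ring

theorem antitoneOn_tangentRemainder_div_sq (hs : Convex ℝ s) (hμ : μ ∈ s)
    (hφ : ∀ x ∈ s, HasDerivAt φ (φ' x) x) (hφ' : ∀ x ∈ s, HasDerivAt φ' (φ'' x) x)
    (hc : ConcaveOn ℝ s φ') :
    AntitoneOn (fun x ↦ tangentRemainder φ φ' μ x / (x - μ) ^ 2) (s \ {μ}) := by
  have hN := antitoneOn_sub_mul_sub_tangentRemainder hs hμ hφ hφ' hc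
  have hG := antitoneOn_tangentRemainder_sub_sq hs hμ hφ hφ' hc
  have on_convex (t : Set ℝ) (ht : Convex ℝ t) (hts : t ⊆ s \ {μ}) :
      AntitoneOn (fun x ↦ tangentRemainder φ φ' μ x / (x - μ) ^ 2) t :=
    ht.antitoneOn_of_hasDerivAt_nonpos
      (fun x hx ↦ hasDerivAt_tangentRemainder_div_sq (hts hx).2 (hφ x (hts hx).1))
      (fun x hx ↦ div_nonpos_of_nonpos_of_nonneg
        (hN.mul_sub_nonpos hμ (by simp) (hts hx).1) (by positivity))
  refine AntitoneOn.diff_singleton_of_separated (c := φ'' μ / 2)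
    (on_convex _ (hs.inter (convex_Iio μ)) fun x hx ↦ ⟨hx.1, hx.2.ne⟩)
    (on_convex _ (hs.inter (convex_Ioi μ)) fun x hx ↦ ⟨hx.1, hx.2.ne'⟩) ?_ ?_
  · intro x hx hxμ
    rw [le_div_iff₀ (by nlinarith)]
    simpa using hG hx hμ hxμ.le
  · intro x hx hxμ
    rw [div_le_iff₀ (by nlinarith)]
    simpa using hG hμ hx hxμ.le

end TangentRemainder

/-- For `μ > 0`, the function `h(x) = (-log x + log μ)/(x-μ)² + 1/(μ(x-μ))` is
monotonically decreasing on `(0,∞) \ {μ}`. -/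
theorem stmt_11 (μ : ℝ) (hμ : 0 < μ) :
    AntitoneOn (fun x : ℝ =>
        (-Real.log x + Real.log μ) / (x - μ) ^ 2 + 1 / (μ * (x - μ)))
      (Ioi 0 \ {μ}) := by
  have hlog : ∀ x ∈ Ioi (0 : ℝ), HasDerivAt (fun x ↦ -Real.log x) (-x⁻¹) x :=
    fun x (hx : 0 < x) ↦ (Real.hasDerivAt_log hx.ne').neg
  have hinv : ∀ x ∈ Ioi (0 : ℝ), HasDerivAt (fun x ↦ -x⁻¹) ((x ^ 2)⁻¹) x :=
    fun x (hx : 0 < x) ↦ (hasDerivAt_inv hx.ne').neg.congr_deriv (neg_neg _)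
  have hconc : ConcaveOn ℝ (Ioi 0) (fun x : ℝ ↦ -x⁻¹) := by
    have := (convexOn_zpow (𝕜 := ℝ) (-1)).neg
    simp only [zpow_neg_one] at this
    exact this
  refine (antitoneOn_tangentRemainder_div_sq (convex_Ioi 0) hμ hlog hinv hconc).congr ?_
  rintro x ⟨hx, hxμ⟩
  have : x - μ ≠ 0 := sub_ne_zero.2 hxμ
  simp only [tangentRemainder]
  field_simp
  ring
end

section
/- Let X be a positive random variable supported on (a,b) ⊂ (0,∞) with mean μ and finite variance, where E[log X] exists. Then log μ - E[log X] ≥ (lim_{x→b} h(x;μ)) · Var(X), where h(x;μ) = (-log x + log μ)/(x-μ)² + 1/(μ(x-μ)); in particular if b < ∞ this gives a strictly positive lower bound on the gap in the AM-GM inequality when Var(X) > 0. -/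
/-!
Taylor's formula with integral remainder for `-log` at `μ` gives, for `x > 0`,
`log μ - log x + (x - μ) / μ = (x - μ)² K(x)` with `K(x) = ∫₀¹ (1 - s) / (μ + s (x - μ))² ds`,
which is `h(x; μ)` for `x ≠ μ`. The integral form shows at once that `K` is positive and
antitone, so `L = K(b) ≤ K(X)` pointwise; multiplying by `(X - μ)²` and taking expectations
(the linear term has mean zero) gives `log μ - E[log X] ≥ L · Var(X)`.
-/

open MeasureTheory Set Filter

noncomputable def logTaylorCoeff (μ x : ℝ) : ℝ :=
  ∫ s in (0 : ℝ)..1, (1 - s) / (μ + s * (x - μ)) ^ 2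

lemma add_mul_sub_pos {μ x s : ℝ} (hμ : 0 < μ) (hx : 0 < x) (hs₀ : 0 ≤ s) (hs₁ : s ≤ 1) :
    0 < μ + s * (x - μ) := by
  have : μ + s * (x - μ) = (1 - s) * μ + s * x := by ring
  rcases hs₀.eq_or_lt with rfl | hs
  · simpa
  · rw [this]; nlinarith [mul_pos hs hx, mul_nonneg (sub_nonneg.2 hs₁) hμ.le]

lemma intervalIntegrable_logTaylorCoeff {μ x : ℝ} (hμ : 0 < μ) (hx : 0 < x) :
    IntervalIntegrable (fun s => (1 - s) / (μ + s * (x - μ)) ^ 2) volume 0 1 := by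
  refine ContinuousOn.intervalIntegrable (ContinuousOn.div (by fun_prop) (by fun_prop) ?_)
  rw [uIcc_of_le zero_le_one]
  exact fun _ hs => (pow_pos (add_mul_sub_pos hμ hx hs.1 hs.2) 2).ne'

lemma logTaylorCoeff_pos {μ x : ℝ} (hμ : 0 < μ) (hx : 0 < x) : 0 < logTaylorCoeff μ x :=
  intervalIntegral.intervalIntegral_pos_of_pos_on (intervalIntegrable_logTaylorCoeff hμ hx)
    (fun _ hs => div_pos (sub_pos.2 hs.2) (pow_pos (add_mul_sub_pos hμ hx hs.1.le hs.2.le) 2))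
    zero_lt_one

lemma logTaylorCoeff_antitoneOn {μ : ℝ} (hμ : 0 < μ) : AntitoneOn (logTaylorCoeff μ) (Ioi 0) := by
  intro x hx y hy hxy
  refine intervalIntegral.integral_mono_on zero_le_one (intervalIntegrable_logTaylorCoeff hμ hy)
    (intervalIntegrable_logTaylorCoeff hμ hx) fun s hs => ?_
  have hpos := add_mul_sub_pos hμ hx hs.1 hs.2
  have hle : μ + s * (x - μ) ≤ μ + s * (y - μ) := by nlinarith [hs.1]
  gcongr
  linarith [hs.2]

lemma logTaylorCoeff_eq {μ x : ℝ} (hμ : 0 < μ) (hx : 0 < x) (hxμ : x ≠ μ) :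
    logTaylorCoeff μ x = (-Real.log x + Real.log μ) / (x - μ) ^ 2 + 1 / (μ * (x - μ)) := by
  set c := x - μ
  have hc : c ≠ 0 := sub_ne_zero.2 hxμ
  -- partial fractions: `(1 - s) / (μ + s c)² = x / (c (μ + s c)²) - 1 / (c (μ + s c))`
  have hderiv : ∀ s ∈ uIcc (0 : ℝ) 1,
      HasDerivAt (fun s => -(x / c ^ 2) * (μ + s * c)⁻¹ - Real.log (μ + s * c) / c ^ 2)
        ((1 - s) / (μ + s * c) ^ 2) s := by
    intro s hs
    rw [uIcc_of_le zero_le_one] at hs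
    have hpos : 0 < μ + s * c := add_mul_sub_pos hμ hx hs.1 hs.2
    have hlin : HasDerivAt (fun s : ℝ => μ + s * c) c s := by
      simpa using ((hasDerivAt_id s).mul_const c).const_add μ
    refine (((hlin.inv hpos.ne').const_mul (-(x / c ^ 2))).sub
      ((hlin.log hpos.ne').div_const (c ^ 2))).congr_deriv ?_
    rw [show x = μ + c by ring]
    field_simp
    ring
  rw [logTaylorCoeff, intervalIntegral.integral_eq_sub_of_hasDerivAt hderiv
    (intervalIntegrable_logTaylorCoeff hμ hx)]
  have h1 : μ + 1 * c = x := by ring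
  simp only [h1, zero_mul, add_zero]
  field_simp
  ring

lemma sq_mul_logTaylorCoeff {μ x : ℝ} (hμ : 0 < μ) (hx : 0 < x) :
    (x - μ) ^ 2 * logTaylorCoeff μ x = -Real.log x + Real.log μ + (x - μ) / μ := by
  rcases eq_or_ne x μ with rfl | hxμ
  · simp
  · rw [logTaylorCoeff_eq hμ hx hxμ]
    have : x - μ ≠ 0 := sub_ne_zero.2 hxμ
    field_simp

lemma integral_pos_of_ae_pos {Ω : Type*} [MeasurableSpace Ω] {P : Measure Ω} [NeZero P]
    {f : Ω → ℝ} (hfi : Integrable f P) (hf : ∀ᵐ ω ∂P, 0 < f ω) : 0 < ∫ ω, f ω ∂P := by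
  rw [integral_pos_iff_support_of_nonneg_ae (hf.mono fun _ h => h.le) hfi, pos_iff_ne_zero]
  intro hsupp
  have hzero : ∀ᵐ ω ∂P, f ω = 0 := by
    rw [ae_iff]
    simpa [Function.support] using hsupp
  obtain ⟨ω, hpos, hz⟩ := (hf.and hzero).exists
  exact hpos.ne' hz

lemma integrable_sub_const_sq {Ω : Type*} [MeasurableSpace Ω] {P : Measure Ω} [IsFiniteMeasure P]
    {X : Ω → ℝ} (hX : Integrable X P) (hX2 : Integrable (fun ω => X ω ^ 2) P) (c : ℝ) :
    Integrable (fun ω => (X ω - c) ^ 2) P := by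
  have : (fun ω => (X ω - c) ^ 2) = fun ω => X ω ^ 2 - 2 * c * X ω + c ^ 2 := by
    funext ω; ring
  rw [this]
  exact (hX2.sub (hX.const_mul _)).add (integrable_const _)

lemma logTaylorCoeff_mul_sq_le {μ x b : ℝ} (hμ : 0 < μ) (hx : 0 < x) (hxb : x ≤ b) :
    logTaylorCoeff μ b * (x - μ) ^ 2 - (x - μ) / μ ≤ Real.log μ - Real.log x := by
  have hmono : logTaylorCoeff μ b ≤ logTaylorCoeff μ x :=
    logTaylorCoeff_antitoneOn hμ hx (hx.trans_le hxb) hxb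
  have := sq_mul_logTaylorCoeff hμ hx
  nlinarith [mul_le_mul_of_nonneg_left hmono (sq_nonneg (x - μ))]

theorem logTaylorCoeff_mul_variance_le {Ω : Type*} [MeasurableSpace Ω] {P : Measure Ω}
    [IsProbabilityMeasure P] {X : Ω → ℝ} {μ b : ℝ} (hμ : 0 < μ)
    (hX : ∀ᵐ ω ∂P, X ω ∈ Ioc 0 b) (hXint : Integrable X P) (hmean : ∫ ω, X ω ∂P = μ)
    (hX2 : Integrable (fun ω => X ω ^ 2) P) (hlog : Integrable (fun ω => Real.log (X ω)) P) :
    logTaylorCoeff μ b * ∫ ω, (X ω - μ) ^ 2 ∂P ≤ Real.log μ - ∫ ω, Real.log (X ω) ∂P := by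
  have hvar := integrable_sub_const_sq hXint hX2 μ
  have hcentered : Integrable (fun ω => (X ω - μ) / μ) P :=
    (hXint.sub (integrable_const μ)).div_const μ
  have hmono : ∫ ω, (logTaylorCoeff μ b * (X ω - μ) ^ 2 - (X ω - μ) / μ) ∂P ≤
      ∫ ω, (Real.log μ - Real.log (X ω)) ∂P :=
    integral_mono_ae ((hvar.const_mul _).sub hcentered) ((integrable_const _).sub hlog)
      (hX.mono fun _ hω => logTaylorCoeff_mul_sq_le hμ hω.1 hω.2)
  rwa [integral_sub (hvar.const_mul _) hcentered, integral_const_mul, integral_div,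
    integral_sub hXint (integrable_const μ), hmean, integral_sub (integrable_const _) hlog,
    integral_const, integral_const, probReal_univ, one_smul, one_smul, sub_self, zero_div,
    sub_zero] at hmono

theorem stmt_13_general {Ω : Type*} [MeasureSpace Ω] [IsProbabilityMeasure (volume : Measure Ω)]
    (a b : ℝ) (ha : 0 < a) (X : Ω → ℝ) (μ L : ℝ)
    (hX : ∀ᵐ ω, X ω ∈ Ioo a b)
    (hXint : Integrable X) (hmean : ∫ ω, X ω = μ)
    (hX2 : Integrable (fun ω => (X ω) ^ 2))
    (hlog : Integrable (fun ω => Real.log (X ω)))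
    (hL : Tendsto (fun x : ℝ =>
        (-Real.log x + Real.log μ) / (x - μ) ^ 2 + 1 / (μ * (x - μ)))
      (nhdsWithin b (Iio b)) (nhds L)) :
    Real.log μ - (∫ ω, Real.log (X ω)) ≥ L * ∫ ω, (X ω - μ) ^ 2 ∧
      (0 < ∫ ω, (X ω - μ) ^ 2 → 0 < L * ∫ ω, (X ω - μ) ^ 2) := by
  have hμ : 0 < μ := hmean ▸ integral_pos_of_ae_pos hXint (hX.mono fun _ h => ha.trans h.1)
  have hμb : μ < b := by
    have : 0 < ∫ ω, (b - X ω) := integral_pos_of_ae_pos ((integrable_const b).sub hXint)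
      (hX.mono fun _ h => sub_pos.2 h.2)
    rw [integral_sub (integrable_const b) hXint, integral_const, probReal_univ, one_smul,
      hmean] at this
    linarith
  have hb : 0 < b := hμ.trans hμb
  obtain rfl : L = logTaylorCoeff μ b := by
    refine tendsto_nhds_unique hL (tendsto_nhdsWithin_of_tendsto_nhds ?_)
    rw [logTaylorCoeff_eq hμ hb hμb.ne']
    have : b - μ ≠ 0 := sub_ne_zero.2 hμb.ne'
    exact ContinuousAt.tendsto (by fun_prop (disch := positivity))
  exact ⟨logTaylorCoeff_mul_variance_le hμ (hX.mono fun _ h => ⟨ha.trans h.1, h.2.le⟩) hXint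
    hmean hX2 hlog, mul_pos (logTaylorCoeff_pos hμ hb)⟩

/-- Sharpened AM-GM for a random variable: with `h(x;μ) = (-log x + log μ)/(x-μ)² + 1/(μ(x-μ))`
and `L = lim_{x→b⁻} h(x;μ)`, we have `log μ - E[log X] ≥ L · Var(X)`, and this lower
bound is strictly positive when `Var(X) > 0` (for finite `b`). -/
theorem stmt_13 {Ω : Type*} [MeasureSpace Ω] [IsProbabilityMeasure (volume : Measure Ω)]
    (a b : ℝ) (ha : 0 < a) (hab : a < b) (X : Ω → ℝ) (μ L : ℝ)
    (hX : ∀ᵐ ω, X ω ∈ Ioo a b)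
    (hXint : Integrable X) (hmean : ∫ ω, X ω = μ)
    (hX2 : Integrable (fun ω => (X ω) ^ 2))
    (hlog : Integrable (fun ω => Real.log (X ω)))
    (hL : Tendsto (fun x : ℝ =>
        (-Real.log x + Real.log μ) / (x - μ) ^ 2 + 1 / (μ * (x - μ)))
      (nhdsWithin b (Iio b)) (nhds L)) :
    Real.log μ - (∫ ω, Real.log (X ω)) ≥ L * ∫ ω, (X ω - μ) ^ 2 ∧
      (0 < ∫ ω, (X ω - μ) ^ 2 → 0 < L * ∫ ω, (X ω - μ) ^ 2) :=
  stmt_13_general a b ha X μ L hX hXint hmean hX2 hlog hL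
end
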